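/- For any integer m ≥ 1 and any unit vector ψ ∈ ℂ^{2^m} with all entries real and nonnegative, there exists a sequence of at most 2^m - 1 two-level real rotations (each acting as Ry(θ) on a pair of coordinates and identity elsewhere) whose product maps the first standard basis vector e₀ to ψ. -/

import Mathlib

/-!
Folding coordinate `j` into coordinate `z` (replace `v z` by `√(v z ^ 2 + v j ^ 2)` and `v j`
by `0`) preserves the sum of squares, and a rotation on `(z, j)` whose half-angle is the polar
angle of `(v z, v j)` undoes the fold. Folding the other `N - 1` coordinates into `z` one at a
time leaves a unit vector supported on `z` with nonnegative entry there, i.e. `e_z`.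
-/

open Finset

/-- The two-level real rotation on coordinates (i, j) with angle θ: acts as
Ry(θ) on span(e_i, e_j) and as the identity elsewhere. -/
noncomputable def twoLevelRotation {n : ℕ} (i j : Fin n) (θ : ℝ) :
    Matrix (Fin n) (Fin n) ℝ :=
  Matrix.of fun a b =>
    if a = i ∧ b = i then Real.cos (θ / 2)
    else if a = i ∧ b = j then -Real.sin (θ / 2)
    else if a = j ∧ b = i then Real.sin (θ / 2)
    else if a = j ∧ b = j then Real.cos (θ / 2)
    else if a = b then 1 else 0

open Matrix

section

variable {n : ℕ} {i j : Fin n}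

theorem twoLevelRotation_mulVec_apply (hij : i ≠ j) (θ : ℝ) (w : Fin n → ℝ) (a : Fin n) :
    (twoLevelRotation i j θ *ᵥ w) a =
      if a = i then Real.cos (θ / 2) * w i - Real.sin (θ / 2) * w j
      else if a = j then Real.sin (θ / 2) * w i + Real.cos (θ / 2) * w j
      else w a := by
  simp only [Matrix.mulVec, dotProduct, twoLevelRotation, Matrix.of_apply]
  by_cases hai : a = i
  · subst hai
    rw [Fintype.sum_eq_add a j hij (fun b hb => by simp [hb.1, hb.2, Ne.symm hb.1])]
    simp only [and_self, ↓reduceIte, Ne.symm hij, and_false, neg_mul]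
    ring
  by_cases haj : a = j
  · subst haj
    rw [Fintype.sum_eq_add i a (Ne.symm hai) (fun b hb => by simp [hb.1, hb.2, Ne.symm hb.2])]
    simp [hai]
  · rw [Fintype.sum_eq_single a (fun b hb => by simp [hai, haj, Ne.symm hb])]
    simp [hai, haj]

theorem exists_twoLevelRotation_mulVec_update_update (hij : i ≠ j) (v : Fin n → ℝ) :
    ∃ θ, twoLevelRotation i j θ *ᵥ
      Function.update (Function.update v j 0) i √(v i ^ 2 + v j ^ 2) = v := by
  set z : ℂ := ⟨v i, v j⟩
  have hz : ‖z‖ = √(v i ^ 2 + v j ^ 2) := by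
    simp [z, Complex.norm_def, Complex.normSq_apply, sq]
  have hcos : Real.cos z.arg * ‖z‖ = v i := by rw [mul_comm, Complex.norm_mul_cos_arg]
  have hsin : Real.sin z.arg * ‖z‖ = v j := by rw [mul_comm, Complex.norm_mul_sin_arg]
  refine ⟨2 * z.arg, funext fun a => ?_⟩
  rw [twoLevelRotation_mulVec_apply hij, mul_div_cancel_left₀ _ two_ne_zero,
    Function.update_self, Function.update_of_ne hij.symm, Function.update_self, ← hz]
  split_ifs with hai haj
  · simp [hai, hcos]
  · simp [haj, hsin]
  · simp [hai, haj]

theorem sum_sq_update_update (hij : i ≠ j) (v : Fin n → ℝ) :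
    ∑ a, Function.update (Function.update v j 0) i √(v i ^ 2 + v j ^ 2) a ^ 2 =
      ∑ a, v a ^ 2 := by
  rw [← sub_eq_zero, ← Finset.sum_sub_distrib,
    Fintype.sum_eq_add i j hij (fun a ha => by simp [ha.1, ha.2])]
  simp [Ne.symm hij, Real.sq_sqrt (by positivity : 0 ≤ v i ^ 2 + v j ^ 2)]

def IsTwoLevelRotation (R : Matrix (Fin n) (Fin n) ℝ) : Prop :=
  ∃ (i j : Fin n) (θ : ℝ), i ≠ j ∧ R = twoLevelRotation i j θ

theorem eq_single_of_sum_sq_eq_one {z : Fin n} {v : Fin n → ℝ} (hsupp : ∀ a ≠ z, v a = 0)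
    (hz : 0 ≤ v z) (hv : ∑ a, v a ^ 2 = 1) : v = Pi.single z 1 := by
  rw [Fintype.sum_eq_single z fun a ha => by simp [hsupp a ha]] at hv
  have hvz : v z = 1 := by nlinarith
  ext a
  by_cases ha : a = z
  · simp [ha, hvz]
  · simp [ha, hsupp a ha]

theorem exists_list_isTwoLevelRotation_prod_mulVec_single (z : Fin n) (S : Finset (Fin n))
    (hzS : z ∉ S) (v : Fin n → ℝ) (hsupp : ∀ a ∉ insert z S, v a = 0) (hz : 0 ≤ v z)
    (hv : ∑ a, v a ^ 2 = 1) :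
    ∃ L : List (Matrix (Fin n) (Fin n) ℝ), L.length ≤ S.card ∧
      (∀ R ∈ L, IsTwoLevelRotation R) ∧ L.prod *ᵥ Pi.single z 1 = v := by
  induction S using Finset.induction_on generalizing v with
  | empty =>
    refine ⟨[], le_rfl, by simp, ?_⟩
    rw [List.prod_nil, Matrix.one_mulVec]
    exact (eq_single_of_sum_sq_eq_one (fun a ha => hsupp a (by simpa using ha)) hz hv).symm
  | insert j S hjS ih =>
    have hzj : z ≠ j := fun h => hzS (h ▸ Finset.mem_insert_self j S)
    set w := Function.update (Function.update v j 0) z √(v z ^ 2 + v j ^ 2)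
    have hw_supp : ∀ a ∉ insert z S, w a = 0 := by
      intro a ha
      rw [Finset.mem_insert, not_or] at ha
      by_cases haj : a = j
      · simp [w, haj, hzj.symm]
      · simp [w, ha.1, haj, hsupp a (by simp [ha.1, haj, ha.2])]
    obtain ⟨θ, hθ⟩ := exists_twoLevelRotation_mulVec_update_update hzj v
    obtain ⟨L, hlen, hrot, hL⟩ := ih (fun h => hzS (Finset.mem_insert_of_mem h)) w hw_supp
      (by simp [w]) (by rw [sum_sq_update_update hzj, hv])
    refine ⟨twoLevelRotation z j θ :: L, ?_, ?_, ?_⟩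
    · rw [Finset.card_insert_of_notMem hjS]; simpa using hlen
    · exact List.forall_mem_cons.2 ⟨⟨z, j, θ, hzj, rfl⟩, hrot⟩
    · rw [List.prod_cons, ← Matrix.mulVec_mulVec, hL, hθ]

end

theorem nonneg_real_state_preparation_by_two_level_rotations
    (m : ℕ)
    (ψ : EuclideanSpace ℝ (Fin (2 ^ m)))
    (hψ : ‖ψ‖ = 1) (hpos : ∀ i, 0 ≤ ψ i) :
    ∃ (k : ℕ) (_ : k ≤ 2 ^ m - 1)
      (R : Fin k → Matrix (Fin (2 ^ m)) (Fin (2 ^ m)) ℝ),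
      (∀ s, ∃ (i j : Fin (2 ^ m)) (θ : ℝ), i ≠ j ∧ R s = twoLevelRotation i j θ) ∧
      (List.ofFn R).prod.mulVec
        (Pi.single (⟨0, Nat.pow_pos (by norm_num)⟩ : Fin (2 ^ m)) 1) = ψ := by
  set z : Fin (2 ^ m) := ⟨0, Nat.pow_pos (by norm_num)⟩
  have hv : ∑ a, ψ a ^ 2 = 1 := by rw [← EuclideanSpace.real_norm_sq_eq, hψ, one_pow]
  obtain ⟨L, hlen, hrot, hL⟩ := exists_list_isTwoLevelRotation_prod_mulVec_single z
    (Finset.univ.erase z) (Finset.notMem_erase z _) ψ (by simp) (hpos z) hv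
  refine ⟨L.length, by simpa using hlen, L.get, fun s => hrot _ (L.get_mem s), ?_⟩
  rwa [List.ofFn_get]
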